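/- arXiv:2010.15008 — 4 statements merged into one kernel-verified Lean document; each statement's English description precedes it below -/
import Mathlib

section
/- Fix n ≥ 1, a receiver strategy g and a type λ ∈ Λ, and let Ī_λ be the λ-partition of the image of g. Then the minimum over best responses s ∈ B(g,λ) of the number of perfectly recovered sequences equals |Ī_λ|, i.e. min_{s ∈ B(g,λ)} |D(g,s)| = |Ī_λ|. -/
noncomputable section

namespace IE

/-- The `n`-letter utility: `U_n(x̂, x, λ) = (1/n) ∑ᵢ U(x̂ᵢ, xᵢ, λ)`. -/
def Un {X Λ : Type*} [Fintype X] (U : X → X → Λ → ℝ) (n : ℕ)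
    (xh x : Fin n → X) (t : Λ) : ℝ :=
  (1 / (n : ℝ)) * ∑ i, U (xh i) (x i) t

/-- The `λ`-partition of a set `I ⊆ X^n`. -/
def lamPart {X Λ : Type*} [Fintype X] (U : X → X → Λ → ℝ) (n : ℕ)
    (I : Set (Fin n → X)) (t : Λ) : Set (Fin n → X) :=
  {x | x ∈ I ∧ ∀ y ∈ I, y ≠ x → Un U n x x t > Un U n y x t}

/-- The best-response set of sender type `λ` to a receiver strategy `g`. -/
def BR {X Λ : Type*} [Fintype X] (U : X → X → Λ → ℝ) (n : ℕ)
    (g : (Fin n → X) → (Fin n → X)) (t : Λ) :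
    Set ((Fin n → X) → (Fin n → X)) :=
  {s | ∀ x : Fin n → X, ∀ s' : (Fin n → X) → (Fin n → X),
    Un U n (g (s x)) x t ≥ Un U n (g (s' x)) x t}

/-- The set of perfectly recovered sequences `D(g,s)`. -/
def Drec {X : Type*} (n : ℕ) (g s : (Fin n → X) → (Fin n → X)) :
    Set (Fin n → X) :=
  {x | g (s x) = x}

/-- `min_{s ∈ B(g,λ)} |D(g,s)|`. -/
def minD {X Λ : Type*} [Fintype X] (U : X → X → Λ → ℝ) (n : ℕ)
    (g : (Fin n → X) → (Fin n → X)) (t : Λ) : ℕ :=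
  sInf ((fun s => (Drec n g s).ncard) '' BR U n g t)

/-- `D*(g) = ∑_λ P(λ) · min_{s ∈ B(g,λ)} |D(g,s)|`. -/
def Dstar {X Λ : Type*} [Fintype X] [Fintype Λ] (U : X → X → Λ → ℝ)
    (P : Λ → ℝ) (n : ℕ) (g : (Fin n → X) → (Fin n → X)) : ℝ :=
  ∑ t, P t * (minD U n g t : ℝ)

/-- The sender graph `G_λ^n` on `X^n`. -/
def senderGraph {X Λ : Type*} [Fintype X] (U : X → X → Λ → ℝ) (n : ℕ)
    (t : Λ) : SimpleGraph (Fin n → X) where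
  Adj x y := x ≠ y ∧ (Un U n x x t ≤ Un U n y x t ∨ Un U n y y t ≤ Un U n x y t)
  symm := by
    constructor
    intro x y h
    exact ⟨h.1.symm, h.2.symm⟩
  loopless := by
    constructor
    intro x h
    exact h.1 rfl

/-- The single-letter sender graph `G_λ` on `X`. -/
def senderGraph1 {X Λ : Type*} (U : X → X → Λ → ℝ) (t : Λ) :
    SimpleGraph X where
  Adj x y := x ≠ y ∧ (U x x t ≤ U y x t ∨ U y y t ≤ U x y t)
  symm := by
    constructor
    intro x y h
    exact ⟨h.1.symm, h.2.symm⟩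
  loopless := by
    constructor
    intro x h
    exact h.1 rfl

/-- A set of vertices is independent in a graph. -/
def IsIndep {V : Type*} (G : SimpleGraph V) (s : Set V) : Prop :=
  ∀ ⦃x⦄, x ∈ s → ∀ ⦃y⦄, y ∈ s → ¬ G.Adj x y

/-- The independence number `α(G)` of a graph on a finite vertex set. -/
def alpha {V : Type*} [Fintype V] (G : SimpleGraph V) : ℕ :=
  sSup {k | ∃ s : Set V, IsIndep G s ∧ s.ncard = k}

end IE

/-!
Every best response must send each `x ∈ Ī_λ` to itself: `x` lies in the image of `g`, so the
sender can make the receiver output `x`, and every other point of the image is strictly worse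
for `x`. Conversely, a best response that recovers nothing else exists: a sequence `x ∉ Ī_λ`
always has a utility-maximizing target in the image of `g` other than `x`, either because `x`
is not a maximizer at all or because some other point of the image ties with it.
-/

namespace IE

variable {X Λ : Type*} [Fintype X] {U : X → X → Λ → ℝ} {n : ℕ} {t : Λ}

theorem mem_BR_iff {g s : (Fin n → X) → (Fin n → X)} :
    s ∈ BR U n g t ↔ ∀ x, ∀ w ∈ Set.range g, Un U n w x t ≤ Un U n (g (s x)) x t :=
  ⟨fun hs x _ ⟨v, hv⟩ => hv ▸ hs x fun _ => v, fun hs x s' => hs x _ ⟨s' x, rfl⟩⟩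

theorem Un_le_self_of_mem_lamPart {I : Set (Fin n → X)} {x : Fin n → X}
    (hx : x ∈ lamPart U n I t) : ∀ w ∈ I, Un U n w x t ≤ Un U n x x t := by
  intro w hw
  rcases eq_or_ne w x with rfl | hwx
  · exact le_rfl
  · exact (hx.2 w hw hwx).le

theorem exists_maximizer_ne_of_notMem_lamPart {I : Set (Fin n → X)} (hI : I.Nonempty)
    {x : Fin n → X} (hx : x ∉ lamPart U n I t) :
    ∃ m ∈ I, m ≠ x ∧ ∀ w ∈ I, Un U n w x t ≤ Un U n m x t := by
  obtain ⟨m, hm, hmax⟩ := I.exists_max_image (fun w => Un U n w x t) I.toFinite hI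
  rcases ne_or_eq m x with hmx | rfl
  · exact ⟨m, hm, hmx, hmax⟩
  · have : ∃ y ∈ I, y ≠ m ∧ Un U n m m t ≤ Un U n y m t := by
      by_contra! h
      exact hx ⟨hm, h⟩
    obtain ⟨y, hy, hym, hle⟩ := this
    exact ⟨y, hy, hym, fun w hw => (hmax w hw).trans hle⟩

theorem lamPart_range_subset_Drec {g s : (Fin n → X) → (Fin n → X)} (hs : s ∈ BR U n g t) :
    lamPart U n (Set.range g) t ⊆ Drec n g s := by
  intro x hx
  by_contra hne
  exact (hx.2 _ ⟨s x, rfl⟩ hne).not_ge (mem_BR_iff.1 hs x x hx.1)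

theorem exists_mem_BR_Drec_eq_lamPart_range (g : (Fin n → X) → (Fin n → X)) :
    ∃ s ∈ BR U n g t, Drec n g s = lamPart U n (Set.range g) t := by
  have target : ∀ x, ∃ m ∈ Set.range g,
      (∀ w ∈ Set.range g, Un U n w x t ≤ Un U n m x t) ∧
        (m = x ↔ x ∈ lamPart U n (Set.range g) t) := by
    intro x
    by_cases hx : x ∈ lamPart U n (Set.range g) t
    · exact ⟨x, hx.1, Un_le_self_of_mem_lamPart hx, iff_of_true rfl hx⟩
    · obtain ⟨m, hm, hmx, hmax⟩ := exists_maximizer_ne_of_notMem_lamPart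
        (Set.nonempty_of_mem (Set.mem_range_self x)) hx
      exact ⟨m, hm, hmax, iff_of_false hmx hx⟩
  choose m hm hmax hmx using target
  choose s hs using hm
  refine ⟨s, mem_BR_iff.2 fun x => hs x ▸ hmax x, Set.ext fun x => ?_⟩
  simp only [Drec, Set.mem_ofPred_eq, hs x, hmx x]

end IE

theorem stmt3_general {X Λ : Type*} [Fintype X]
    (U : X → X → Λ → ℝ) (n : ℕ)
    (g : (Fin n → X) → (Fin n → X)) (t : Λ) :
    IE.minD U n g t = (IE.lamPart U n (Set.range g) t).ncard := by
  obtain ⟨s, hs, hD⟩ := IE.exists_mem_BR_Drec_eq_lamPart_range (U := U) (t := t) g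
  refine IsLeast.csInf_eq ⟨⟨s, hs, congrArg Set.ncard hD⟩, ?_⟩
  rintro _ ⟨s', hs', rfl⟩
  exact Set.ncard_le_ncard (IE.lamPart_range_subset_Drec hs') (Set.toFinite _)

/-- `min_{s ∈ B(g,λ)} |D(g,s)| = |Ī_λ|`, where `Ī_λ` is the
`λ`-partition of the image of `g`. -/
theorem stmt3 {X Λ : Type*} [Fintype X] [Nonempty X] [Fintype Λ] [Nonempty Λ]
    (U : X → X → Λ → ℝ) (n : ℕ) (hn : 1 ≤ n)
    (g : (Fin n → X) → (Fin n → X)) (t : Λ) :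
    IE.minD U n g t = (IE.lamPart U n (Set.range g) t).ncard :=
  stmt3_general U n g t
end
end

section
/- (Theorem 1.) Fix n ≥ 1 and a receiver strategy g, and for each λ ∈ Λ let Ī_λ^n be the λ-partition of the image of g. Then D*(g) = ∑_{λ∈Λ} P(λ)·|Ī_λ^n|. -/
noncomputable section

/-!
Every best response recovers each sequence of the `λ`-partition of the image of `g`, since
decoding it exactly is strictly better than any other output. Conversely, the best response that
always picks a maximizer of the sender's utility over the image, and picks one different from the
true sequence whenever it can, recovers nothing else; so the minimum is attained at `|Ī_λ|`.
-/

theorem Set.Finite.exists_isMaxOn_eq_iff {α β : Type*} [LinearOrder β] {I : Set α}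
    (hI : I.Finite) (hne : I.Nonempty) (f : α → β) (x : α) :
    ∃ y ∈ I, IsMaxOn f I y ∧ (y = x ↔ x ∈ I ∧ ∀ z ∈ I, z ≠ x → f z < f x) := by
  by_cases hx : x ∈ I ∧ ∀ z ∈ I, z ≠ x → f z < f x
  · refine ⟨x, hx.1, fun z hz => ?_, iff_of_true rfl hx⟩
    rcases eq_or_ne z x with rfl | hzx
    · exact le_rfl
    · exact (hx.2 z hz hzx).le
  obtain ⟨y, hyI, hymax⟩ := Set.exists_max_image I f hI hne
  rcases eq_or_ne y x with rfl | hyx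
  · obtain ⟨z, hzI, hzy, hle⟩ : ∃ z ∈ I, z ≠ y ∧ f y ≤ f z := by
      by_contra! h
      exact hx ⟨hyI, h⟩
    exact ⟨z, hzI, fun w hw => (hymax w hw).trans hle, iff_of_false hzy hx⟩
  · exact ⟨y, hyI, hymax, iff_of_false hyx hx⟩

namespace IE

variable {X Λ : Type*} [Fintype X] (U : X → X → Λ → ℝ) {n : ℕ}
  (g : (Fin n → X) → (Fin n → X)) (t : Λ)

theorem lamPart_subset_Drec {s : (Fin n → X) → (Fin n → X)} (hs : s ∈ BR U n g t) :
    lamPart U n (Set.range g) t ⊆ Drec n g s := by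
  rintro x ⟨⟨z, rfl⟩, hstrict⟩
  by_contra hne
  exact (hs (g z) fun _ => z).not_gt (hstrict _ ⟨s (g z), rfl⟩ hne)

theorem exists_mem_BR_Drec_eq_lamPart :
    ∃ s ∈ BR U n g t, Drec n g s = lamPart U n (Set.range g) t := by
  have hpick (x : Fin n → X) := (Set.finite_range g).exists_isMaxOn_eq_iff
    ⟨g x, Set.mem_range_self x⟩ (fun y => Un U n y x t) x
  choose y hy hmax hfix using hpick
  choose s hs using hy
  refine ⟨s, fun x s' => ?_, Set.ext fun x => ?_⟩
  · rw [hs x]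
    exact hmax x ⟨s' x, rfl⟩
  · change g (s x) = x ↔ _
    rw [hs x]
    exact hfix x

theorem minD_eq_ncard_lamPart :
    minD U n g t = (lamPart U n (Set.range g) t).ncard := by
  obtain ⟨s₀, hs₀, hD⟩ := exists_mem_BR_Drec_eq_lamPart U g t
  refine IsLeast.csInf_eq ⟨⟨s₀, hs₀, congrArg Set.ncard hD⟩, ?_⟩
  rintro _ ⟨s, hs, rfl⟩
  exact Set.ncard_le_ncard (lamPart_subset_Drec U g t hs) (Set.toFinite _)

end IE

theorem stmt4_general {X Λ : Type*} [Fintype X] [Fintype Λ]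
    (U : X → X → Λ → ℝ) (P : Λ → ℝ)
    (n : ℕ) (g : (Fin n → X) → (Fin n → X)) :
    IE.Dstar U P n g
      = ∑ t, P t * ((IE.lamPart U n (Set.range g) t).ncard : ℝ) := by
  simp only [IE.Dstar, IE.minD_eq_ncard_lamPart]

/-- Theorem 1: `D*(g) = ∑_λ P(λ)·|Ī_λ^n|`, with `Ī_λ^n` the
`λ`-partition of the image of `g`. -/
theorem stmt4 {X Λ : Type*} [Fintype X] [Nonempty X] [Fintype Λ] [Nonempty Λ]
    (U : X → X → Λ → ℝ) (P : Λ → ℝ) (hP0 : ∀ t, 0 ≤ P t) (hP1 : ∑ t, P t = 1)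
    (n : ℕ) (hn : 1 ≤ n) (g : (Fin n → X) → (Fin n → X)) :
    IE.Dstar U P n g
      = ∑ t, P t * ((IE.lamPart U n (Set.range g) t).ncard : ℝ) :=
  stmt4_general U P n g
end
end

section
/- (Corollary 1, lower bound.) Fix n ≥ 1. For every Stackelberg equilibrium strategy g_n* of the receiver, D*(g_n*) ≥ α(∪_{λ∈Λ} G_λ^n); equivalently the rate satisfies R(g_n*) ≥ α(∪_{λ∈Λ} G_λ^n)^{1/n}. -/
noncomputable section

/-!
Let `A` be a maximum independent set of `⋃_λ G_λ^n` and let the receiver decode every message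
`y` to `y` itself if `y ∈ A` and to a fixed element of `A` otherwise. A sender of type `λ` holding
`x ∈ A` can secure `U_n(x, x, λ)` by sending `x`; if a best response made the receiver output some
`y ≠ x`, then `y ∈ A` and `U_n(x, x, λ) ≤ U_n(y, x, λ)`, so `x` and `y` would be adjacent in
`G_λ^n`. Hence every best response of every type recovers all of `A`, which gives
`D*(g) ≥ |A| = α` for this `g`, and a fortiori for a Stackelberg strategy.
-/

namespace IE

section Independence

variable {V : Type*}

theorem isIndep_singleton (G : SimpleGraph V) (v : V) : IsIndep G {v} := by
  rintro x rfl y rfl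
  exact G.irrefl

theorem IsIndep.anti {G H : SimpleGraph V} {s : Set V} (hGH : G ≤ H) (hs : IsIndep H s) :
    IsIndep G s :=
  fun _ hx _ hy hadj => hs hx hy (hGH hadj)

theorem bddAbove_indep_ncard [Finite V] (G : SimpleGraph V) :
    BddAbove {k | ∃ s : Set V, IsIndep G s ∧ s.ncard = k} := by
  refine ⟨Nat.card V, ?_⟩
  rintro k ⟨s, -, rfl⟩
  exact Set.ncard_le_card s

theorem exists_isIndep_ncard_eq_alpha [Fintype V] (G : SimpleGraph V) :
    ∃ A : Set V, IsIndep G A ∧ A.ncard = alpha G ∧ (Nonempty V → A.Nonempty) := by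
  obtain ⟨A, hA, hAcard⟩ : alpha G ∈ {k | ∃ s : Set V, IsIndep G s ∧ s.ncard = k} :=
    Nat.sSup_mem ⟨0, ∅, fun _ h => h.elim, Set.ncard_empty V⟩ (bddAbove_indep_ncard G)
  refine ⟨A, hA, hAcard, fun ⟨v⟩ => ?_⟩
  have hone : 1 ≤ alpha G :=
    le_csSup (bddAbove_indep_ncard G) ⟨{v}, isIndep_singleton G v, Set.ncard_singleton v⟩
  rw [← Set.ncard_pos, hAcard]
  exact hone

end Independence

theorem exists_retraction {V : Type*} {A : Set V} (hA : Nonempty V → A.Nonempty) :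
    ∃ g : V → V, (∀ x ∈ A, g x = x) ∧ ∀ z, g z ∈ A := by
  classical
  refine ⟨fun z => if z ∈ A then z else (hA ⟨z⟩).some, fun x hx => if_pos hx, fun z => ?_⟩
  dsimp only
  split_ifs with hz
  · exact hz
  · exact (hA ⟨z⟩).some_mem

section Game

variable {X Λ : Type*} [Fintype X] (U : X → X → Λ → ℝ) (n : ℕ)

theorem BR_nonempty (g : (Fin n → X) → (Fin n → X)) (t : Λ) : (BR U n g t).Nonempty := by
  choose best hbest using fun x =>
    have : Nonempty (Fin n → X) := ⟨x⟩
    Finite.exists_max fun z => Un U n (g z) x t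
  exact ⟨best, fun x s' => hbest x (s' x)⟩

theorem subset_Drec_of_mem_BR {t : Λ} {A : Set (Fin n → X)} (hA : IsIndep (senderGraph U n t) A)
    {g s : (Fin n → X) → (Fin n → X)} (hfix : ∀ x ∈ A, g x = x) (hmaps : ∀ z, g z ∈ A)
    (hs : s ∈ BR U n g t) : A ⊆ Drec n g s := by
  intro x hx
  by_contra hne
  have hbest : Un U n x x t ≤ Un U n (g (s x)) x t := by
    simpa only [hfix x hx] using hs x fun _ => x
  exact hA hx (hmaps (s x)) ⟨Ne.symm hne, Or.inl hbest⟩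

theorem ncard_le_minD {t : Λ} {A : Set (Fin n → X)} (hA : IsIndep (senderGraph U n t) A)
    {g : (Fin n → X) → (Fin n → X)} (hfix : ∀ x ∈ A, g x = x) (hmaps : ∀ z, g z ∈ A) :
    A.ncard ≤ minD U n g t := by
  refine le_csInf ((BR_nonempty U n g t).image _) ?_
  rintro m ⟨s, hs, rfl⟩
  exact Set.ncard_le_ncard (subset_Drec_of_mem_BR U n hA hfix hmaps hs)

theorem le_Dstar_of_forall_le_minD [Fintype Λ] {P : Λ → ℝ} (hP0 : ∀ t, 0 ≤ P t)
    (hP1 : ∑ t, P t = 1) {g : (Fin n → X) → (Fin n → X)} {k : ℕ}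
    (hk : ∀ t, k ≤ minD U n g t) : (k : ℝ) ≤ Dstar U P n g :=
  calc (k : ℝ) = ∑ t, P t * k := by rw [← Finset.sum_mul, hP1, one_mul]
    _ ≤ ∑ t, P t * (minD U n g t : ℝ) :=
      Finset.sum_le_sum fun t _ => mul_le_mul_of_nonneg_left (Nat.cast_le.2 (hk t)) (hP0 t)

end Game

end IE

theorem stmt9_general {X Λ : Type*} [Fintype X] [Fintype Λ]
    (U : X → X → Λ → ℝ) (P : Λ → ℝ) (hP0 : ∀ t, 0 ≤ P t) (hP1 : ∑ t, P t = 1)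
    (n : ℕ)
    (gstar : (Fin n → X) → (Fin n → X))
    (hstar : ∀ g : (Fin n → X) → (Fin n → X), IE.Dstar U P n g ≤ IE.Dstar U P n gstar) :
    (IE.alpha (⨆ t : Λ, IE.senderGraph U n t) : ℝ) ≤ IE.Dstar U P n gstar ∧
      (IE.alpha (⨆ t : Λ, IE.senderGraph U n t) : ℝ) ^ ((1 : ℝ) / n)
        ≤ IE.Dstar U P n gstar ^ ((1 : ℝ) / n) := by
  obtain ⟨A, hA, hAcard, hAne⟩ :=
    IE.exists_isIndep_ncard_eq_alpha (⨆ t : Λ, IE.senderGraph U n t)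
  obtain ⟨g, hfix, hmaps⟩ := IE.exists_retraction hAne
  have hg : (IE.alpha (⨆ t : Λ, IE.senderGraph U n t) : ℝ) ≤ IE.Dstar U P n g :=
    IE.le_Dstar_of_forall_le_minD U n hP0 hP1 fun t =>
      hAcard ▸ IE.ncard_le_minD U n (hA.anti (le_iSup _ t)) hfix hmaps
  have hgstar := hg.trans (hstar g)
  exact ⟨hgstar, Real.rpow_le_rpow (Nat.cast_nonneg _) hgstar (by positivity)⟩

/-- Corollary 1, lower bound: `D*(g_n*) ≥ α(∪_λ G_λ^n)`, equivalently
`R(g_n*) ≥ α(∪_λ G_λ^n)^{1/n}`. -/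
theorem stmt9 {X Λ : Type*} [Fintype X] [Nonempty X] [Fintype Λ] [Nonempty Λ]
    (U : X → X → Λ → ℝ) (P : Λ → ℝ) (hP0 : ∀ t, 0 ≤ P t) (hP1 : ∑ t, P t = 1)
    (n : ℕ) (hn : 1 ≤ n)
    (gstar : (Fin n → X) → (Fin n → X))
    (hstar : ∀ g : (Fin n → X) → (Fin n → X), IE.Dstar U P n g ≤ IE.Dstar U P n gstar) :
    (IE.alpha (⨆ t : Λ, IE.senderGraph U n t) : ℝ) ≤ IE.Dstar U P n gstar ∧
      (IE.alpha (⨆ t : Λ, IE.senderGraph U n t) : ℝ) ^ ((1 : ℝ) / n)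
        ≤ IE.Dstar U P n gstar ^ ((1 : ℝ) / n) :=
  stmt9_general U P hP0 hP1 n gstar hstar
end
end

section
/- For every n ≥ 1, the independence number of the n-letter union sender graph satisfies α(∪_{λ∈Λ} G_λ^n) ≥ (α(∪_{λ∈Λ} G_λ))^n. -/
/-! If `S` is independent in `⋃_λ G_λ`, then every type `λ` strictly prefers to report each
letter of `S` truthfully among the letters of `S`. Summing these strict preferences letter by
letter, every type strictly prefers to report each sequence of `S^n` truthfully among `S^n`, so
`S^n` is independent in `⋃_λ G_λ^n` and has `|S|^n` elements. -/

noncomputable section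

namespace IE

section Alpha

variable {V : Type*} [Fintype V] (G : SimpleGraph V)

theorem bddAbove_ncard_isIndep : BddAbove {k | ∃ s : Set V, IsIndep G s ∧ s.ncard = k} := by
  refine ⟨Nat.card V, ?_⟩
  rintro k ⟨s, -, rfl⟩
  exact Set.ncard_le_card s

theorem ncard_le_alpha {s : Set V} (hs : IsIndep G s) : s.ncard ≤ alpha G :=
  le_csSup (bddAbove_ncard_isIndep G) ⟨s, hs, rfl⟩

theorem exists_isIndep_ncard_eq_alpha_s12 : ∃ s : Set V, IsIndep G s ∧ s.ncard = alpha G :=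
  Nat.sSup_mem (s := {k | ∃ s : Set V, IsIndep G s ∧ s.ncard = k})
    ⟨0, ∅, fun _ h => h.elim, Set.ncard_empty V⟩ (bddAbove_ncard_isIndep G)

end Alpha

theorem ncard_univ_pi_const {ι α : Type*} [Fintype ι] (s : Set α) :
    (Set.univ.pi fun _ : ι => s).ncard = s.ncard ^ Fintype.card ι := by
  rw [← Nat.card_coe_set_eq, Nat.card_congr (Equiv.Set.univPi _), Nat.card_pi,
    Finset.prod_const, Finset.card_univ, Nat.card_coe_set_eq]

variable {X Λ : Type*} (U : X → X → Λ → ℝ)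

theorem lt_of_isIndep_iSup_senderGraph1 {S : Set X}
    (hS : IsIndep (⨆ t, senderGraph1 U t) S) (t : Λ) {a b : X} (ha : a ∈ S) (hb : b ∈ S)
    (hab : a ≠ b) : U b a t < U a a t := by
  have hnadj := hS ha hb
  rw [SimpleGraph.iSup_adj, not_exists] at hnadj
  by_contra! hle
  exact hnadj t ⟨hab, Or.inl hle⟩

theorem Un_lt_Un_self [Fintype X] {n : ℕ} {t : Λ} {a b : Fin n → X}
    (hle : ∀ i, U (b i) (a i) t ≤ U (a i) (a i) t)
    (hlt : ∃ j, U (b j) (a j) t < U (a j) (a j) t) :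
    Un U n b a t < Un U n a a t := by
  obtain ⟨j, hj⟩ := hlt
  have hn : (0 : ℝ) < n := by exact_mod_cast j.pos
  exact mul_lt_mul_of_pos_left
    (Finset.sum_lt_sum (fun i _ => hle i) ⟨j, Finset.mem_univ j, hj⟩) (by positivity)

theorem isIndep_univ_pi_iSup_senderGraph [Fintype X] {S : Set X}
    (hS : IsIndep (⨆ t, senderGraph1 U t) S) (n : ℕ) :
    IsIndep (⨆ t, senderGraph U n t) (Set.univ.pi fun _ => S) := by
  have hpref : ∀ t (a b : Fin n → X), (∀ i, a i ∈ S) → (∀ i, b i ∈ S) → a ≠ b →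
      Un U n b a t < Un U n a a t := by
    intro t a b ha hb hab
    obtain ⟨j, hj⟩ := Function.ne_iff.mp hab
    refine Un_lt_Un_self U (fun i => ?_)
      ⟨j, lt_of_isIndep_iSup_senderGraph1 U hS t (ha j) (hb j) hj⟩
    by_cases hi : a i = b i
    · rw [hi]
    · exact (lt_of_isIndep_iSup_senderGraph1 U hS t (ha i) (hb i) hi).le
  intro x hx y hy hadj
  rw [Set.mem_univ_pi] at hx hy
  obtain ⟨t, hxy, hxy' | hyx⟩ := SimpleGraph.iSup_adj.mp hadj
  · exact (hpref t x y hx hy hxy).not_ge hxy'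
  · exact (hpref t y x hy hx hxy.symm).not_ge hyx

end IE

theorem stmt12_general {X Λ : Type*} [Fintype X]
    (U : X → X → Λ → ℝ) (n : ℕ) :
    (IE.alpha (⨆ t : Λ, IE.senderGraph1 U t)) ^ n
      ≤ IE.alpha (⨆ t : Λ, IE.senderGraph U n t) := by
  obtain ⟨S, hS, hScard⟩ := IE.exists_isIndep_ncard_eq_alpha_s12 (⨆ t : Λ, IE.senderGraph1 U t)
  have hpow := IE.ncard_univ_pi_const (ι := Fin n) S
  rw [Fintype.card_fin, hScard] at hpow
  exact hpow ▸ IE.ncard_le_alpha _ (IE.isIndep_univ_pi_iSup_senderGraph U hS n)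

/-- `α(∪_λ G_λ^n) ≥ (α(∪_λ G_λ))^n` for every `n ≥ 1`. -/
theorem stmt12 {X Λ : Type*} [Fintype X] [Nonempty X] [Fintype Λ] [Nonempty Λ]
    (U : X → X → Λ → ℝ) (n : ℕ) (hn : 1 ≤ n) :
    (IE.alpha (⨆ t : Λ, IE.senderGraph1 U t)) ^ n
      ≤ IE.alpha (⨆ t : Λ, IE.senderGraph U n t) :=
  stmt12_general U n
end
end
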